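/- Let G be a simple graph on [n] with edge ideal I(G). Then I(G) is quasi-linear if and only if the complement graph \bar{G} contains no induced 4-cycle. -/

import Mathlib

open MvPolynomial

/-- The monomial `x^u` in the polynomial ring `K[x_i : i ∈ σ]`. -/
noncomputable def mon (K : Type) [Field K] {σ : Type} (u : σ →₀ ℕ) :
    MvPolynomial σ K := MvPolynomial.monomial u 1

/-- Total degree of an exponent vector. -/
def mdeg {σ : Type} (u : σ →₀ ℕ) : ℕ := u.sum fun _ e => e

/-- The monomial ideal generated by the monomials with exponent vectors in `S`. -/
noncomputable def monIdeal (K : Type) [Field K] {σ : Type} (S : Set (σ →₀ ℕ)) :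
    Ideal (MvPolynomial σ K) := Ideal.span ((mon K) '' S)

/-- An ideal is generated by variables. -/
def genByVars {K : Type} [Field K] {σ : Type} (J : Ideal (MvPolynomial σ K)) : Prop :=
  ∃ A : Set σ, J = Ideal.span ((fun i => (X i : MvPolynomial σ K)) '' A)

/-- An ideal is generated by linear forms. -/
def genByLinForms {K : Type} [Field K] {σ : Type} (J : Ideal (MvPolynomial σ K)) : Prop :=
  ∃ S : Set (MvPolynomial σ K), (∀ f ∈ S, f.IsHomogeneous 1) ∧ J = Ideal.span S

/-- `S` is an antichain under divisibility of monomials, i.e. it is the minimal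
monomial generating set `G(I)` of the monomial ideal `I` it generates. -/
def IsMinGenSet {σ : Type} (S : Set (σ →₀ ℕ)) : Prop :=
  ∀ u ∈ S, ∀ v ∈ S, u ≤ v → u = v

/-- A monomial ideal, presented by its minimal monomial generating set `S`, is
quasi-linear if for every `u ∈ S` the colon ideal `(G(I) \ {u}) : u` is generated
by variables. -/
def QuasiLinear (K : Type) [Field K] {σ : Type} (S : Set (σ →₀ ℕ)) : Prop :=
  ∀ u ∈ S, genByVars (Submodule.colon (monIdeal K (S \ {u})) (Ideal.span {mon K u}))

/-- A minimal graded free resolution of an ideal `I` in a polynomial ring: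
graded free modules `F i = ⊕_k R(-dg i k)` of rank `b i`, differentials
`F (i+1) → F i` given by the matrices `A i`, whose entries are homogeneous of the
appropriate degree and of positive degree (this is minimality, i.e. all entries lie
in the graded maximal ideal), together with an augmentation `F 0 → I` given by the
homogeneous generators `g`, everything being exact. -/
structure MinFreeRes {K : Type} [Field K] {σ : Type} (I : Ideal (MvPolynomial σ K)) where
  b : ℕ → ℕ
  dg : (i : ℕ) → Fin (b i) → ℕ
  g : Fin (b 0) → MvPolynomial σ K
  A : (i : ℕ) → Matrix (Fin (b i)) (Fin (b (i+1))) (MvPolynomial σ K)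
  g_hom : ∀ k, (g k).IsHomogeneous (dg 0 k)
  A_hom : ∀ i k l, A i k l = 0 ∨
    ((A i k l).IsHomogeneous (dg (i+1) l - dg i k) ∧ dg i k < dg (i+1) l)
  aug_range : LinearMap.range (Fintype.linearCombination (MvPolynomial σ K)
      g) = I
  aug_exact : LinearMap.ker (Fintype.linearCombination (MvPolynomial σ K)
      g) = LinearMap.range ((A 0).mulVecLin)
  is_exact : ∀ i, LinearMap.ker ((A i).mulVecLin) = LinearMap.range ((A (i+1)).mulVecLin)

/-- The graded Betti number `β_{i,j}` read off from a minimal graded free resolution: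
the number of generators of the `i`-th free module of degree `j`. -/
noncomputable def MinFreeRes.beta {K : Type} [Field K] {σ : Type}
    {I : Ideal (MvPolynomial σ K)} (res : MinFreeRes I) (i j : ℕ) : ℕ :=
  (Finset.univ.filter fun k => res.dg i k = j).card

/-- `I` has a `d`-linear resolution: it has a minimal graded free resolution in which the
`i`-th free module is generated entirely in degree `i + d`, i.e. `β_{i,j}(I) = 0`
whenever `j - i ≠ d`. -/
def HasLinRes {K : Type} [Field K] {σ : Type} (I : Ideal (MvPolynomial σ K))
    (d : ℕ) : Prop :=
  ∃ res : MinFreeRes I, ∀ i k, res.dg i k = i + d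

/-- `reg I ≤ r`: a minimal graded free resolution of `I` has all generators of the
`i`-th free module in degrees `≤ i + r`, i.e. `β_{i,j}(I) = 0` whenever `j - i > r`. -/
def RegLE {K : Type} [Field K] {σ : Type} (I : Ideal (MvPolynomial σ K)) (r : ℕ) : Prop :=
  ∃ res : MinFreeRes I, ∀ i k, res.dg i k ≤ i + r


/-! The colon ideal of a monomial ideal by a monomial `x^u` is generated by the monomials
`x^(v - u)`, `v ∈ G(I)` (truncated subtraction: `x^(v - u) = x^v / gcd(x^u, x^v)`), so it is
generated by variables iff each of these is divisible by a variable lying in the colon ideal.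
For the edge ideal and `u = x_p x_q`, an edge `v` meeting `{p, q}` contributes a variable `x_k`
with `k` a neighbour of `p` or `q`, which lies in the colon ideal; an edge `ij` disjoint from
`pq` contributes `x_i x_j`, and the colon ideal contains `x_i` or `x_j` iff `i` or `j` is
adjacent to `p` or `q`. Two disjoint edges `pq`, `ij` of `G` with no edge between them are
exactly an induced 4-cycle `p i q j` of the complement. -/

section MonomialIdeal

variable {K : Type} [Field K] {σ : Type}

theorem mem_monIdeal_iff {T : Set (σ →₀ ℕ)} {f : MvPolynomial σ K} :
    f ∈ monIdeal K T ↔ ∀ m ∈ f.support, ∃ v ∈ T, v ≤ m :=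
  mem_ideal_span_monomial_image

theorem support_mon (w : σ →₀ ℕ) : (mon K w).support = {w} := by
  classical
  exact support_monomial.trans (if_neg one_ne_zero)

theorem mon_mem_monIdeal_iff {T : Set (σ →₀ ℕ)} {w : σ →₀ ℕ} :
    mon K w ∈ monIdeal K T ↔ ∃ v ∈ T, v ≤ w := by
  simp only [mem_monIdeal_iff, support_mon, Finset.mem_singleton, forall_eq]

theorem colon_monIdeal_span_mon (T : Set (σ →₀ ℕ)) (u : σ →₀ ℕ) :
    Submodule.colon (monIdeal K T) (Ideal.span {mon K u}) = monIdeal K ((· - u) '' T) := by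
  ext f
  have hsupp : (f * mon K u).support = f.support.map (addRightEmbedding u) :=
    AddMonoidAlgebra.support_coeff_mul_single f _ (by simp) _
  simp only [Ideal.mem_colon_span_singleton, mem_monIdeal_iff, hsupp, Finset.forall_mem_map,
    addRightEmbedding_apply, Set.exists_mem_image, tsub_le_iff_right]

theorem genByVars_monIdeal_iff (T : Set (σ →₀ ℕ)) :
    genByVars (monIdeal K T) ↔
      ∀ v ∈ T, ∃ k, Finsupp.single k 1 ≤ v ∧ ∃ w ∈ T, w ≤ Finsupp.single k 1 := by
  have hX (k : σ) : (X k : MvPolynomial σ K) = mon K (Finsupp.single k 1) := rfl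
  constructor
  · rintro ⟨A, hA⟩ v hv
    have hvA : mon K v ∈ Ideal.span ((fun i => (X i : MvPolynomial σ K)) '' A) :=
      hA ▸ Ideal.subset_span ⟨v, hv, rfl⟩
    obtain ⟨k, hkA, hvk⟩ :=
      mem_ideal_span_X_image.mp hvA v (by simp only [support_mon, Finset.mem_singleton])
    refine ⟨k, Finsupp.single_le_iff.mpr (Nat.one_le_iff_ne_zero.mpr hvk), ?_⟩
    rw [← mon_mem_monIdeal_iff (K := K), ← hX, hA]
    exact Ideal.subset_span ⟨k, hkA, rfl⟩
  · intro h
    refine ⟨{k | ∃ w ∈ T, w ≤ Finsupp.single k 1}, le_antisymm ?_ ?_⟩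
    · refine Ideal.span_le.mpr ?_
      rintro _ ⟨v, hv, rfl⟩
      obtain ⟨k, hkv, hk⟩ := h v hv
      have hdvd : X k ∣ mon K v := by
        rw [hX, mon, mon, monomial_dvd_monomial]
        exact ⟨Or.inr hkv, one_dvd _⟩
      exact Ideal.mem_of_dvd _ hdvd (Ideal.subset_span (Set.mem_image_of_mem _ hk))
    · refine Ideal.span_le.mpr ?_
      rintro _ ⟨k, hk, rfl⟩
      exact mon_mem_monIdeal_iff.mpr hk

theorem quasiLinear_iff (S : Set (σ →₀ ℕ)) :
    QuasiLinear K S ↔ ∀ u ∈ S, ∀ v ∈ S \ {u},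
      ∃ k, Finsupp.single k 1 ≤ v - u ∧ ∃ w ∈ S \ {u}, w - u ≤ Finsupp.single k 1 := by
  simp only [QuasiLinear, colon_monIdeal_span_mon, genByVars_monIdeal_iff, Set.forall_mem_image,
    Set.exists_mem_image]

end MonomialIdeal

namespace SimpleGraph

open Finsupp

variable {V : Type} (G : SimpleGraph V)

def edgeExponents : Set (V →₀ ℕ) :=
  {w | ∃ i j, G.Adj i j ∧ w = single i 1 + single j 1}

variable {G}

theorem single_add_single_ne_single_add_single_iff {i j p q : V} :
    single i 1 + single j 1 ≠ (single p 1 + single q 1 : V →₀ ℕ) ↔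
      ¬ ((i = p ∧ j = q) ∨ (i = q ∧ j = p)) := by
  simp [single_add_single_eq_single_add_single one_ne_zero one_ne_zero]

theorem one_le_single_add_single_add_single_apply {k p q a : V} :
    1 ≤ (single k 1 + (single p 1 + single q 1) : V →₀ ℕ) a ↔ a = k ∨ a = p ∨ a = q := by
  classical
  simp only [Finsupp.add_apply, single_apply]
  split_ifs <;> grind

theorem single_add_single_le_iff {i j : V} (hij : i ≠ j) {f : V →₀ ℕ} :
    single i 1 + single j 1 ≤ f ↔ 1 ≤ f i ∧ 1 ≤ f j := by
  classical
  refine ⟨fun h => ⟨?_, ?_⟩, fun ⟨hi, hj⟩ a => ?_⟩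
  · simpa [single_apply, hij.symm] using h i
  · simpa [single_apply, hij] using h j
  · simp only [Finsupp.add_apply, single_apply]
    split_ifs <;> grind

theorem single_le_single_add_single_tsub_iff {i j p q k : V} (hij : i ≠ j) (hpq : p ≠ q) :
    single k 1 ≤ (single i 1 + single j 1) - (single p 1 + single q 1) ↔
      (k = i ∨ k = j) ∧ k ≠ p ∧ k ≠ q := by
  classical
  simp only [single_le_iff, Finsupp.tsub_apply, Finsupp.add_apply, single_apply]
  split_ifs <;> grind

theorem exists_edgeExponents_tsub_le_single_iff {p q k : V} (hpq : G.Adj p q) (hkp : k ≠ p)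
    (hkq : k ≠ q) :
    (∃ w ∈ G.edgeExponents \ {single p 1 + single q 1},
        w - (single p 1 + single q 1) ≤ single k 1) ↔ G.Adj p k ∨ G.Adj q k := by
  simp only [tsub_le_iff_right]
  constructor
  · rintro ⟨_, ⟨⟨a, b, hab, rfl⟩, hne⟩, hle⟩
    rw [Set.mem_singleton_iff, ← ne_eq, single_add_single_ne_single_add_single_iff] at hne
    rw [single_add_single_le_iff hab.ne, one_le_single_add_single_add_single_apply,
      one_le_single_add_single_add_single_apply] at hle
    obtain ⟨ha | ha | ha, hb | hb | hb⟩ := hle <;> subst ha hb <;> simp_all [G.adj_comm]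
  · rintro (h | h) <;> refine ⟨_, ⟨⟨_, k, h, rfl⟩, ?_⟩, ?_⟩ <;>
      simp only [Set.mem_singleton_iff, ← ne_eq, single_add_single_ne_single_add_single_iff,
        single_add_single_le_iff h.ne, one_le_single_add_single_add_single_apply] <;>
      tauto

theorem exists_var_in_colon_edgeExponents_iff {p q i j : V} (hpq : G.Adj p q)
    (hij : G.Adj i j) :
    (∃ k, single k 1 ≤ (single i 1 + single j 1) - (single p 1 + single q 1) ∧
        ∃ w ∈ G.edgeExponents \ {single p 1 + single q 1},
          w - (single p 1 + single q 1) ≤ single k 1) ↔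
      ∃ k, ((k = i ∨ k = j) ∧ k ≠ p ∧ k ≠ q) ∧ (G.Adj p k ∨ G.Adj q k) := by
  refine exists_congr fun k => ?_
  rw [single_le_single_add_single_tsub_iff hij.ne hpq.ne]
  exact and_congr_right fun hk => exists_edgeExponents_tsub_le_single_iff hpq hk.2.1 hk.2.2

theorem quasiLinear_edgeExponents_iff (K : Type) [Field K] :
    QuasiLinear K G.edgeExponents ↔ ∀ p q i j, G.Adj p q → G.Adj i j →
      i ≠ p → i ≠ q → j ≠ p → j ≠ q → G.Adj p i ∨ G.Adj q i ∨ G.Adj p j ∨ G.Adj q j := by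
  rw [quasiLinear_iff]
  constructor
  · intro h p q i j hpq hij hip hiq hjp hjq
    have hne : single i 1 + single j 1 ∉ ({single p 1 + single q 1} : Set (V →₀ ℕ)) := by
      rw [Set.mem_singleton_iff, ← ne_eq, single_add_single_ne_single_add_single_iff]
      tauto
    obtain ⟨k, ⟨rfl | rfl, -⟩, hk⟩ := (exists_var_in_colon_edgeExponents_iff hpq hij).mp
      (h _ ⟨p, q, hpq, rfl⟩ _ ⟨⟨i, j, hij, rfl⟩, hne⟩) <;> tauto
  · rintro h _ ⟨p, q, hpq, rfl⟩ _ ⟨⟨i, j, hij, rfl⟩, hne⟩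
    rw [Set.mem_singleton_iff, ← ne_eq, single_add_single_ne_single_add_single_iff] at hne
    rw [exists_var_in_colon_edgeExponents_iff hpq hij]
    have hij_ne := hij.ne
    have hpq_ne := hpq.ne
    by_cases hi : i = p ∨ i = q
    · refine ⟨j, ⟨Or.inr rfl, ?_⟩, ?_⟩ <;> grind [G.adj_comm]
    by_cases hj : j = p ∨ j = q
    · refine ⟨i, ⟨Or.inl rfl, ?_⟩, ?_⟩ <;> grind [G.adj_comm]
    grind

end SimpleGraph

/-- Let `G` be a simple graph on `[n]` with edge ideal
`I(G) = (x_i x_j : {i,j} ∈ E(G))`.  Then `I(G)` is quasi-linear if and only if the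
complement graph `Ḡ` contains no induced 4-cycle. -/
theorem stmt_9 {K : Type} [Field K] {n : ℕ} (G : SimpleGraph (Fin n)) :
    QuasiLinear K
      {w : Fin n →₀ ℕ | ∃ i j, G.Adj i j ∧ w = Finsupp.single i 1 + Finsupp.single j 1}
    ↔ ¬ ∃ a b c d : Fin n, a ≠ c ∧ b ≠ d ∧
        Gᶜ.Adj a b ∧ Gᶜ.Adj b c ∧ Gᶜ.Adj c d ∧ Gᶜ.Adj d a ∧
        ¬ Gᶜ.Adj a c ∧ ¬ Gᶜ.Adj b d := by
  refine (G.quasiLinear_edgeExponents_iff K).trans ?_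
  simp only [SimpleGraph.compl_adj, not_and_not_right]
  constructor
  · rintro h ⟨a, b, c, d, hac, hbd, hab, hbc, hcd, hda, hnac, hnbd⟩
    have hcross := h a c b d (hnac hac) (hnbd hbd) hab.1.symm hbc.1 hda.1 hcd.1.symm
    grind [G.adj_comm]
  · rintro h p q i j hpq hij hip hiq hjp hjq
    by_contra hnot
    exact h ⟨p, i, q, j, hpq.ne, hij.ne, ⟨Ne.symm hip, by tauto⟩, ⟨hiq, by grind [G.adj_comm]⟩,
      ⟨Ne.symm hjq, by tauto⟩, ⟨hjp, by grind [G.adj_comm]⟩, fun _ => hpq, fun _ => hij⟩
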